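/- arXiv:2006.04804 — 5 statements merged into one kernel-verified Lean document; each statement's English description precedes it below -/
import Mathlib

section
/- (Theorem 1(ii): the aggregation kernel is not universal.) Fix n ≥ 2, d ≥ 1, let σ(t) = 1/(1 + exp(−t)) be the sigmoid, and define the aggregation kernel agg(X,Y) = ⟪Σ_i X i, Σ_j Y j⟫ on tuples X, Y : Fin n → EuclideanSpace ℝ (Fin d). Then there exist a compact, permutation-invariant set K of tuples, a continuous permutation-invariant function f : K → ℝ, and ε > 0, such that for every m ∈ ℕ, α : Fin m → ℝ, β : Fin m → ℝ, and Θ : Fin m → (Fin n → EuclideanSpace ℝ (Fin d)), there is some X ∈ K with |f(X) − Σ_j α j * σ(agg(X, Θ j) + β j)| ≥ ε. (Indeed, any function of this form takes equal values on two tuples whose coordinate sums Σ_i X i agree, while for n ≥ 2 there exist tuples with equal coordinate sums that are not permutations of each other.) -/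
open scoped RealInnerProductSpace BigOperators

noncomputable section

def sigmoid (t : ℝ) : ℝ := 1 / (1 + Real.exp (-t))

def Coupling (n m : ℕ) : Set (Matrix (Fin n) (Fin m) ℝ) :=
  {T | (∀ i j, 0 ≤ T i j) ∧ (∀ i, ∑ j, T i j = 1 / (n : ℝ)) ∧
       (∀ j, ∑ i, T i j = 1 / (m : ℝ))}

def WL2 {n m d : ℕ} (X : Fin n → EuclideanSpace ℝ (Fin d))
    (Y : Fin m → EuclideanSpace ℝ (Fin d)) : ℝ :=
  sInf ((fun T : Matrix (Fin n) (Fin m) ℝ =>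
    ∑ i, ∑ j, T i j * ‖X i - Y j‖ ^ 2) '' Coupling n m)

def Wdot {n m d : ℕ} (X : Fin n → EuclideanSpace ℝ (Fin d))
    (Y : Fin m → EuclideanSpace ℝ (Fin d)) : ℝ :=
  sSup ((fun T : Matrix (Fin n) (Fin m) ℝ =>
    ∑ i, ∑ j, T i j * ⟪X i, Y j⟫) '' Coupling n m)

def agg {n d : ℕ} (X Y : Fin n → EuclideanSpace ℝ (Fin d)) : ℝ :=
  ⟪∑ i, X i, ∑ j, Y j⟫

/-
A sigmoid network over `agg` sees a tuple `X` only through `∑ i, X i`. For a unit vector `v`, the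
tuples `0` and `Pi.single i₀ v - Pi.single i₁ v` (with `i₀ ≠ i₁`, possible as `2 ≤ n`) have the
same sum, but the permutation-invariant function `X ↦ ∑ i, ‖X i‖ ^ 2` takes the values `0` and `2`
on them, so every network is off by at least `1` at one of the two.
-/

theorem le_abs_sub_or_le_abs_sub {a b ε : ℝ} (h : 2 * ε ≤ |a - b|) (c : ℝ) :
    ε ≤ |a - c| ∨ ε ≤ |b - c| := by
  by_contra! hc
  linarith [abs_sub_le a c b, abs_sub_comm b c]

section PiSingle

variable {ι E : Type*} [Fintype ι] [SeminormedAddCommGroup E]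

theorem pi_norm_comp_perm (X : ι → E) (π : Equiv.Perm ι) : ‖X ∘ π‖ = ‖X‖ := by
  refine le_antisymm
    ((pi_norm_le_iff_of_nonneg (norm_nonneg X)).2 fun i => norm_le_pi_norm X (π i))
    ((pi_norm_le_iff_of_nonneg (norm_nonneg _)).2 fun i => ?_)
  simpa using norm_le_pi_norm (X ∘ π) (π.symm i)

variable [DecidableEq ι]

theorem norm_single_sub_single_le {i j : ι} (hij : i ≠ j) (v : E) :
    ‖(Pi.single i v - Pi.single j v : ι → E)‖ ≤ ‖v‖ := by
  refine (pi_norm_le_iff_of_nonneg (norm_nonneg v)).2 fun k => ?_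
  rcases eq_or_ne k i with rfl | hki
  · simp [hij]
  rcases eq_or_ne k j with rfl | hkj
  · simp [hki]
  simp [hki, hkj]

theorem sum_norm_sq_single_sub_single {i j : ι} (hij : i ≠ j) (v : E) :
    ∑ k, ‖(Pi.single i v - Pi.single j v : ι → E) k‖ ^ 2 = 2 * ‖v‖ ^ 2 := by
  rw [Fintype.sum_eq_add i j hij fun k hk => by simp [hk.1, hk.2]]
  simp [hij, hij.symm]
  ring

end PiSingle

section Aggregation

variable {n d : ℕ} {X X' : Fin n → EuclideanSpace ℝ (Fin d)}

theorem agg_eq_of_sum_eq (h : ∑ i, X i = ∑ i, X' i) (Y : Fin n → EuclideanSpace ℝ (Fin d)) :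
    agg X Y = agg X' Y := by
  rw [agg, agg, h]

theorem sum_sigmoid_agg_eq_of_sum_eq (h : ∑ i, X i = ∑ i, X' i) {m : ℕ} (α β : Fin m → ℝ)
    (Θ : Fin m → Fin n → EuclideanSpace ℝ (Fin d)) :
    ∑ j, α j * sigmoid (agg X (Θ j) + β j) = ∑ j, α j * sigmoid (agg X' (Θ j) + β j) := by
  simp only [agg_eq_of_sum_eq h]

end Aggregation

theorem stmt_4 {n d : ℕ} (hn : 2 ≤ n) (hd : 1 ≤ d) :
    ∃ (K : Set (Fin n → EuclideanSpace ℝ (Fin d)))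
      (f : (Fin n → EuclideanSpace ℝ (Fin d)) → ℝ) (ε : ℝ),
      IsCompact K ∧
      (∀ X ∈ K, ∀ π : Equiv.Perm (Fin n), (X ∘ π) ∈ K) ∧
      ContinuousOn f K ∧
      (∀ X ∈ K, ∀ π : Equiv.Perm (Fin n), f (X ∘ π) = f X) ∧
      0 < ε ∧
      ∀ (m : ℕ) (α β : Fin m → ℝ) (Θ : Fin m → (Fin n → EuclideanSpace ℝ (Fin d))),
        ∃ X ∈ K, ε ≤ |f X - ∑ j, α j * sigmoid (agg X (Θ j) + β j)| := by
  have : Nonempty (Fin d) := ⟨⟨0, hd⟩⟩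
  obtain ⟨v, hv⟩ := exists_norm_eq (EuclideanSpace ℝ (Fin d)) zero_le_one
  set i₀ : Fin n := ⟨0, by omega⟩
  set i₁ : Fin n := ⟨1, by omega⟩
  have hij : i₀ ≠ i₁ := by simp [i₀, i₁]
  set X : Fin n → EuclideanSpace ℝ (Fin d) := Pi.single i₀ v - Pi.single i₁ v with hX
  refine ⟨Metric.closedBall 0 1, fun Z => ∑ i, ‖Z i‖ ^ 2, 1, isCompact_closedBall 0 1,
    fun Z hZ π => by simpa [pi_norm_comp_perm] using hZ, by fun_prop,
    fun Z _ π => Equiv.sum_comp π fun i => ‖Z i‖ ^ 2, one_pos, fun m α β Θ => ?_⟩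
  have hsum : ∑ i, X i = ∑ i, (0 : Fin n → EuclideanSpace ℝ (Fin d)) i := by
    simp [hX]
  have hsep : 2 * 1 ≤ |∑ i, ‖X i‖ ^ 2 - ∑ i, ‖(0 : Fin n → EuclideanSpace ℝ (Fin d)) i‖ ^ 2| := by
    rw [hX, sum_norm_sq_single_sub_single hij, hv]
    simp
  rcases le_abs_sub_or_le_abs_sub hsep (∑ j, α j * sigmoid (agg 0 (Θ j) + β j)) with h | h
  · refine ⟨X, ?_, by rwa [sum_sigmoid_agg_eq_of_sum_eq hsum]⟩
    simpa [hv] using norm_single_sub_single_le hij v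
  · exact ⟨0, Metric.mem_closedBall_self zero_le_one, h⟩
end
end

section
/- (Discriminatory implies universal.) Fix n, d ≥ 1, let σ(t) = 1/(1 + exp(−t)), let K be a compact subset of the tuple space (Fin n → EuclideanSpace ℝ (Fin d)), and let k be a real-valued kernel on pairs of tuples such that x ↦ k(Y, x) is continuous on K for every tuple Y. Suppose σ is discriminatory with respect to k on K, i.e.: for every finite signed regular Borel measure μ on K, if ∫_K σ(k(Y, x) + θ) dμ(x) = 0 for all tuples Y and all θ ∈ ℝ, then μ = 0. Then the set of functions of the form x ↦ Σ_{j=1}^m α_j σ(k(Q_j, x) + β_j) (with m ∈ ℕ, α_j, β_j ∈ ℝ, Q_j tuples) is dense, for the sup norm, in the space C(K, ℝ) of continuous real-valued functions on K. -/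
open scoped RealInnerProductSpace BigOperators

noncomputable section

/-!
If the span of the neurons `x ↦ σ(k(Y, x) + θ)` were not dense in `C(K, ℝ)`, Hahn–Banach would
give a nonzero continuous functional vanishing on all of them. By the Riesz extension theorem such
a functional is a difference of two positive ones, and Riesz–Markov–Kakutani represents these by
finite regular measures `μ₁`, `μ₂`. They integrate every neuron alike, so `μ₁ = μ₂` because `σ` is
discriminatory, and the functional vanishes after all.
-/

theorem Submodule.exists_dual_map_eq_zero_of_notMem_topologicalClosure {E : Type*}
    [NormedAddCommGroup E] [NormedSpace ℝ E] (S : Submodule ℝ E) {x : E}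
    (hx : x ∉ S.topologicalClosure) :
    ∃ l : StrongDual ℝ E, (∀ y ∈ S, l y = 0) ∧ l x ≠ 0 := by
  have : IsClosed (S.topologicalClosure : Set E) := S.isClosed_topologicalClosure
  obtain ⟨l, hl⟩ := SeparatingDual.exists_ne_zero (R := ℝ)
    ((Submodule.Quotient.mk_eq_zero _).not.2 hx)
  refine ⟨l ∘L S.topologicalClosure.mkQL, fun y hy => ?_, hl⟩
  simp [(Submodule.Quotient.mk_eq_zero _).2 (S.le_topologicalClosure hy)]

theorem exists_dist_sum_lt_of_mem_closure_span_range {E ι : Type*} [SeminormedAddCommGroup E]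
    [NormedSpace ℝ E] {v : ι → E} {x : E}
    (hx : x ∈ (Submodule.span ℝ (Set.range v)).topologicalClosure) {ε : ℝ} (hε : 0 < ε) :
    ∃ (m : ℕ) (c : Fin m → ℝ) (i : Fin m → ι), dist x (∑ j, c j • v (i j)) < ε := by
  obtain ⟨y, hy, hxy⟩ := Metric.mem_closure_iff.mp hx ε hε
  obtain ⟨m, c, g, rfl⟩ := Submodule.mem_span_set'.mp hy
  choose i hi using fun j => (g j).2
  exact ⟨m, c, i, by simpa only [hi] using hxy⟩

section CompactSpace

open MeasureTheory

variable {X : Type*} [TopologicalSpace X] [CompactSpace X]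

theorem ContinuousLinearMap.neg_opNorm_mul_le_apply (L : C(X, ℝ) →L[ℝ] ℝ) {u : C(X, ℝ)}
    {c : ℝ} (hc : 0 ≤ c) (hu : ∀ x, 0 ≤ u x ∧ u x ≤ c) : -(‖L‖ * c) ≤ L u := by
  have hu_norm : ‖u‖ ≤ c := (u.norm_le hc).2 fun x => by
    rw [Real.norm_of_nonneg (hu x).1]
    exact (hu x).2
  calc -(‖L‖ * c) ≤ -(‖L‖ * ‖u‖) := neg_le_neg (by gcongr)
    _ ≤ L u := neg_le_of_abs_le (L.le_opNorm u)

theorem ContinuousLinearMap.exists_positiveLinearMap_sub_eq (L : C(X, ℝ) →L[ℝ] ℝ) :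
    ∃ P N : C(X, ℝ) →ₚ[ℝ] ℝ, ∀ g, L g = P g - N g := by
  rcases isEmpty_or_nonempty X with _ | ⟨⟨x₀⟩⟩
  · exact ⟨0, 0, fun g => by simp [Subsingleton.elim g 0]⟩
  -- On pairs `(u, v)` with constant sum `u + v = c`, the functional `L u + ‖L‖ c` is nonnegative
  -- when `u, v ≥ 0`. Its positive extension `G` to `C(X, ℝ)²` gives `P = G(·, 0)`,
  -- `N = G(0, ·)`, and `L g = G(g, -g)` because `(g, -g)` has sum `0`.
  let sum : C(X, ℝ) × C(X, ℝ) →ₗ[ℝ] C(X, ℝ) := .coprod .id .id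
  let f : C(X, ℝ) × C(X, ℝ) →ₗ.[ℝ] ℝ := (L.toLinearMap ∘ₗ .fst ℝ _ _ +
      ‖L‖ • (ContinuousMap.evalCLM ℝ x₀).toLinearMap ∘ₗ sum).toPMap
    ((ℝ ∙ (1 : C(X, ℝ))).comap sum)
  have hf_nonneg : ∀ p : f.domain, (p : C(X, ℝ) × C(X, ℝ)) ∈ PointedCone.positive ℝ _ →
      0 ≤ f p := by
    rintro ⟨⟨u, v⟩, hp⟩ hpos
    obtain ⟨hu, hv⟩ : (∀ x, 0 ≤ u x) ∧ ∀ x, 0 ≤ v x := by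
      simpa [Prod.le_def, ContinuousMap.le_def] using hpos
    obtain ⟨c, hc⟩ := Submodule.mem_span_singleton.mp (Submodule.mem_comap.mp hp)
    have hsum : ∀ x, u x + v x = c := fun x => by
      simpa [sum] using (DFunLike.congr_fun hc x).symm
    have hLu := L.neg_opNorm_mul_le_apply (c := c) (by linarith [hsum x₀, hu x₀, hv x₀])
      fun x => ⟨hu x, by linarith [hsum x, hv x]⟩
    change 0 ≤ L u + ‖L‖ * (u x₀ + v x₀)
    rw [hsum x₀]
    linarith
  have hf_dense :
      ∀ y, ∃ p : f.domain, (p : C(X, ℝ) × C(X, ℝ)) + y ∈ PointedCone.positive ℝ _ := by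
    intro y
    have h : ∀ w : C(X, ℝ), 0 ≤ ‖w‖ • 1 + w := fun w => ContinuousMap.le_def.2 fun x => by
      simpa [neg_le_iff_add_nonneg'] using neg_le_of_abs_le (w.norm_coe_le_norm x)
    refine ⟨⟨(‖y.1‖ • 1, ‖y.2‖ • 1), ?_⟩, ⟨h y.1, h y.2⟩⟩
    exact Submodule.mem_comap.2 (Submodule.mem_span_singleton.2
      ⟨‖y.1‖ + ‖y.2‖, by simp [sum, add_smul]⟩)
  obtain ⟨G, hGf, hG⟩ := riesz_extension (PointedCone.positive ℝ _) f hf_nonneg hf_dense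
  refine ⟨.mk₀ (G ∘ₗ .inl ℝ _ _) fun g hg => hG _ (by simpa [Prod.le_def] using hg),
    .mk₀ (G ∘ₗ .inr ℝ _ _) fun g hg => hG _ (by simpa [Prod.le_def] using hg), fun g => ?_⟩
  have hG_antidiag := hGf ⟨(g, -g), by simp [f, sum]⟩
  change L g = G (g, 0) - G (0, g)
  rw [← map_sub]
  simpa [f, sum] using hG_antidiag.symm

variable [T2Space X] [MeasurableSpace X] [BorelSpace X]

theorem PositiveLinearMap.exists_regular_integral_eq (P : C(X, ℝ) →ₚ[ℝ] ℝ) :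
    ∃ μ : Measure X, IsFiniteMeasure μ ∧ μ.Regular ∧ ∀ g : C(X, ℝ), ∫ x, g x ∂μ = P g := by
  let Λ : CompactlySupportedContinuousMap X ℝ →ₚ[ℝ] ℝ :=
    { toFun g := P g
      map_add' g g' := map_add P (g : C(X, ℝ)) g'
      map_smul' c g := map_smul P c (g : C(X, ℝ))
      monotone' g g' h := P.monotone' h }
  exact ⟨RealRMK.rieszMeasure Λ, inferInstance, inferInstance, fun g =>
    RealRMK.integral_rieszMeasure Λ (CompactlySupportedContinuousMap.continuousMapEquiv g)⟩

theorem ContinuousLinearMap.exists_regular_integral_sub_integral_eq (L : C(X, ℝ) →L[ℝ] ℝ) :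
    ∃ μ₁ μ₂ : Measure X, IsFiniteMeasure μ₁ ∧ IsFiniteMeasure μ₂ ∧ μ₁.Regular ∧ μ₂.Regular ∧
      ∀ g : C(X, ℝ), L g = ∫ x, g x ∂μ₁ - ∫ x, g x ∂μ₂ := by
  obtain ⟨P, N, hL⟩ := L.exists_positiveLinearMap_sub_eq
  obtain ⟨μ₁, hμ₁, hreg₁, hP⟩ := P.exists_regular_integral_eq
  obtain ⟨μ₂, hμ₂, hreg₂, hN⟩ := N.exists_regular_integral_eq
  exact ⟨μ₁, μ₂, hμ₁, hμ₂, hreg₁, hreg₂, fun g => by rw [hL, hP, hN]⟩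

theorem ContinuousMap.topologicalClosure_span_eq_top_of_integral_eq_imp_eq (G : Set C(X, ℝ))
    (hG : ∀ μ₁ μ₂ : Measure X, IsFiniteMeasure μ₁ → IsFiniteMeasure μ₂ → μ₁.Regular →
      μ₂.Regular → (∀ g ∈ G, ∫ x, g x ∂μ₁ = ∫ x, g x ∂μ₂) → μ₁ = μ₂) :
    (Submodule.span ℝ G).topologicalClosure = ⊤ := by
  refine Submodule.eq_top_iff'.2 fun F => by_contra fun hF => ?_
  obtain ⟨l, hlG, hlF⟩ :=
    (Submodule.span ℝ G).exists_dual_map_eq_zero_of_notMem_topologicalClosure hF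
  obtain ⟨μ₁, μ₂, hμ₁, hμ₂, hreg₁, hreg₂, hl⟩ := l.exists_regular_integral_sub_integral_eq
  have hμ : μ₁ = μ₂ := hG μ₁ μ₂ hμ₁ hμ₂ hreg₁ hreg₂ fun g hg => by
    linarith [hl g, hlG g (Submodule.subset_span hg)]
  exact hlF (by simp [hl, hμ])

end CompactSpace

theorem sigmoid_eq_real_sigmoid : sigmoid = Real.sigmoid :=
  funext fun _ => one_div _

open MeasureTheory in
theorem stmt_5_general {n d : ℕ}
    (K : Set (Fin n → EuclideanSpace ℝ (Fin d))) (hK : IsCompact K)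
    (k : (Fin n → EuclideanSpace ℝ (Fin d)) → (Fin n → EuclideanSpace ℝ (Fin d)) → ℝ)
    (hk : ∀ Y, ContinuousOn (k Y) K)
    (hdisc : ∀ (μ₁ μ₂ : Measure K), IsFiniteMeasure μ₁ → IsFiniteMeasure μ₂ →
      μ₁.Regular → μ₂.Regular →
      (∀ (Y : Fin n → EuclideanSpace ℝ (Fin d)) (θ : ℝ),
        ∫ x, sigmoid (k Y (x : Fin n → EuclideanSpace ℝ (Fin d)) + θ) ∂μ₁ =
        ∫ x, sigmoid (k Y (x : Fin n → EuclideanSpace ℝ (Fin d)) + θ) ∂μ₂) →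
      μ₁ = μ₂)
    (f : K → ℝ) (hf : Continuous f) (ε : ℝ) (hε : 0 < ε) :
    ∃ (m : ℕ) (α β : Fin m → ℝ) (Q : Fin m → (Fin n → EuclideanSpace ℝ (Fin d))),
      ∀ x : K, |f x - ∑ j, α j * sigmoid (k (Q j) (x : Fin n → EuclideanSpace ℝ (Fin d)) + β j)| < ε := by
  have : CompactSpace K := isCompact_iff_compactSpace.mp hK
  let neuron : (Fin n → EuclideanSpace ℝ (Fin d)) × ℝ → C(K, ℝ) := fun p =>
    ⟨fun x => sigmoid (k p.1 x + p.2), by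
      rw [sigmoid_eq_real_sigmoid]
      exact continuous_sigmoid.comp ((hk p.1).domRestrict.add continuous_const)⟩
  have hdense : (Submodule.span ℝ (Set.range neuron)).topologicalClosure = ⊤ :=
    ContinuousMap.topologicalClosure_span_eq_top_of_integral_eq_imp_eq _
      fun μ₁ μ₂ hμ₁ hμ₂ hreg₁ hreg₂ h => hdisc μ₁ μ₂ hμ₁ hμ₂ hreg₁ hreg₂ fun Y θ =>
        h _ ⟨(Y, θ), rfl⟩
  obtain ⟨m, c, i, hdist⟩ := exists_dist_sum_lt_of_mem_closure_span_range
    (hdense ▸ Submodule.mem_top (x := (⟨f, hf⟩ : C(K, ℝ)))) hε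
  refine ⟨m, c, fun j => (i j).2, fun j => (i j).1, fun x => lt_of_le_of_lt ?_ hdist⟩
  simpa [neuron, Real.dist_eq, ContinuousMap.sum_apply] using
    ContinuousMap.dist_apply_le_dist (f := ⟨f, hf⟩) (g := ∑ j, c j • neuron (i j)) x

open MeasureTheory in
theorem stmt_5 {n d : ℕ} (hn : 1 ≤ n) (hd : 1 ≤ d)
    (K : Set (Fin n → EuclideanSpace ℝ (Fin d))) (hK : IsCompact K)
    (k : (Fin n → EuclideanSpace ℝ (Fin d)) → (Fin n → EuclideanSpace ℝ (Fin d)) → ℝ)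
    (hk : ∀ Y, ContinuousOn (k Y) K)
    (hdisc : ∀ (μ₁ μ₂ : Measure K), IsFiniteMeasure μ₁ → IsFiniteMeasure μ₂ →
      μ₁.Regular → μ₂.Regular →
      (∀ (Y : Fin n → EuclideanSpace ℝ (Fin d)) (θ : ℝ),
        ∫ x, sigmoid (k Y (x : Fin n → EuclideanSpace ℝ (Fin d)) + θ) ∂μ₁ =
        ∫ x, sigmoid (k Y (x : Fin n → EuclideanSpace ℝ (Fin d)) + θ) ∂μ₂) →
      μ₁ = μ₂)
    (f : K → ℝ) (hf : Continuous f) (ε : ℝ) (hε : 0 < ε) :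
    ∃ (m : ℕ) (α β : Fin m → ℝ) (Q : Fin m → (Fin n → EuclideanSpace ℝ (Fin d))),
      ∀ x : K, |f x - ∑ j, α j * sigmoid (k (Q j) (x : Fin n → EuclideanSpace ℝ (Fin d)) + β j)| < ε :=
  stmt_5_general K hK k hk hdisc f hf ε hε
end
end

section
/- (Separation axiom for W_L2.) For two point clouds X, Y : Fin n → EuclideanSpace ℝ (Fin d) of the same size n, W_L2(X,Y) = 0 if and only if there exists a permutation π of Fin n such that Y j = X (π j) for all j, i.e., X and Y are equal as point clouds (multisets). -/
open scoped RealInnerProductSpace BigOperators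

noncomputable section

/-!
The coupling polytope is compact and the transport cost is continuous, so `WL2 X Y` is attained
by some coupling `T`. If that cost vanishes, `T` lives on the pairs `(i, j)` with `X i = Y j`.
Summing `T` over the pairs whose common value is `v` then yields both the mass `#X⁻¹{v} / n` of
`v` in `X` and its mass `#Y⁻¹{v} / n` in `Y`, so the two clouds have fibres of the same size and
differ by a permutation. Conversely, a permutation induces a coupling of cost zero.
-/

open Finset

lemma coupling_apply_le {n m : ℕ} {T : Matrix (Fin n) (Fin m) ℝ} (hT : T ∈ Coupling n m)
    (i : Fin n) (j : Fin m) : T i j ≤ 1 / n :=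
  hT.2.1 i ▸ single_le_sum (fun k _ => hT.1 i k) (mem_univ j)

lemma isCompact_coupling (n m : ℕ) : IsCompact (Coupling n m) := by
  have hbdd : Coupling n m ⊆ Set.univ.pi fun _ => Set.univ.pi fun _ => Set.Icc 0 (1 / n) :=
    fun T hT i _ j _ => ⟨hT.1 i j, coupling_apply_le hT i j⟩
  refine (isCompact_univ_pi fun _ => isCompact_univ_pi fun _ => isCompact_Icc).of_isClosed_subset
    ?_ hbdd
  simp only [Coupling, Set.ofPred_and, Set.ofPred_forall]
  refine .inter (isClosed_iInter fun i => isClosed_iInter fun j => isClosed_le (by fun_prop)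
    (by fun_prop)) (.inter (isClosed_iInter fun i => isClosed_eq (by fun_prop) (by fun_prop))
      (isClosed_iInter fun j => isClosed_eq (by fun_prop) (by fun_prop)))

def permCoupling {n : ℕ} (π : Equiv.Perm (Fin n)) : Matrix (Fin n) (Fin n) ℝ :=
  fun i j => if i = π j then 1 / n else 0

lemma permCoupling_mem {n : ℕ} (π : Equiv.Perm (Fin n)) : permCoupling π ∈ Coupling n n := by
  refine ⟨fun i j => by unfold permCoupling; positivity, fun i => ?_, fun j => ?_⟩
  · simpa [permCoupling] using Equiv.sum_comp π fun k => if i = k then (1 : ℝ) / n else 0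
  · simp [permCoupling]

section Cost

variable {E : Type*} [NormedAddCommGroup E] {n m : ℕ} (X : Fin n → E) (Y : Fin m → E)

def transportCost (T : Matrix (Fin n) (Fin m) ℝ) : ℝ :=
  ∑ i, ∑ j, T i j * ‖X i - Y j‖ ^ 2

lemma transportCost_nonneg {T : Matrix (Fin n) (Fin m) ℝ} (hT : T ∈ Coupling n m) :
    0 ≤ transportCost X Y T :=
  sum_nonneg fun i _ => sum_nonneg fun j _ => mul_nonneg (hT.1 i j) (sq_nonneg _)

lemma continuous_transportCost : Continuous (transportCost X Y) := by
  unfold transportCost; fun_prop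

lemma exists_transportCost_eq_WL2 {d : ℕ} (X : Fin n → EuclideanSpace ℝ (Fin d))
    (Y : Fin m → EuclideanSpace ℝ (Fin d)) (hne : (Coupling n m).Nonempty) :
    ∃ T ∈ Coupling n m, transportCost X Y T = WL2 X Y := by
  obtain ⟨T, hT, hmin⟩ := (isCompact_coupling n m).exists_isMinOn hne
    (continuous_transportCost X Y).continuousOn
  have hleast : IsLeast (transportCost X Y '' Coupling n m) (transportCost X Y T) :=
    ⟨⟨T, hT, rfl⟩, Set.forall_mem_image.2 fun _ hS => hmin hS⟩
  exact ⟨T, hT, hleast.csInf_eq.symm⟩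

lemma eq_zero_of_transportCost_eq_zero {T : Matrix (Fin n) (Fin m) ℝ} (hT : T ∈ Coupling n m)
    (h : transportCost X Y T = 0) : ∀ i j, X i ≠ Y j → T i j = 0 := by
  intro i j hij
  have hterm := (sum_eq_zero_iff_of_nonneg fun j _ => mul_nonneg (hT.1 i j) (sq_nonneg _)).1
    ((sum_eq_zero_iff_of_nonneg fun i _ => sum_nonneg fun j _ =>
      mul_nonneg (hT.1 i j) (sq_nonneg _)).1 h i (mem_univ i)) j (mem_univ j)
  simpa [sub_eq_zero, hij] using hterm

end Cost

lemma transportCost_permCoupling {E : Type*} [NormedAddCommGroup E] {n : ℕ} {X Y : Fin n → E}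
    {π : Equiv.Perm (Fin n)} (hπ : ∀ j, Y j = X (π j)) :
    transportCost X Y (permCoupling π) = 0 :=
  sum_eq_zero fun i _ => sum_eq_zero fun j _ => by
    by_cases h : i = π j <;> simp [permCoupling, h, hπ]

lemma card_fiber_div_eq_of_coupling {α : Type*} [DecidableEq α] {n m : ℕ} {X : Fin n → α}
    {Y : Fin m → α} {T : Matrix (Fin n) (Fin m) ℝ} (hT : T ∈ Coupling n m)
    (hsupp : ∀ i j, X i ≠ Y j → T i j = 0)
    (v : α) : (#{i | X i = v} : ℝ) / n = #{j | Y j = v} / m := by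
  have hrows : (#{i | X i = v} : ℝ) / n = ∑ i with X i = v, ∑ j with Y j = v, T i j := by
    rw [← mul_one_div, ← nsmul_eq_mul, ← sum_const]
    refine sum_congr rfl fun i hi => (hT.2.1 i ▸ sum_filter_of_ne fun j _ hTij => ?_).symm
    by_contra hj
    exact hTij (hsupp i j fun hXY => hj (hXY ▸ (mem_filter.1 hi).2))
  have hcols : (#{j | Y j = v} : ℝ) / m = ∑ j with Y j = v, ∑ i with X i = v, T i j := by
    rw [← mul_one_div, ← nsmul_eq_mul, ← sum_const]
    refine sum_congr rfl fun j hj => (hT.2.2 j ▸ sum_filter_of_ne fun i _ hTij => ?_).symm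
    by_contra hi
    exact hTij (hsupp i j fun hXY => hi (hXY ▸ (mem_filter.1 hj).2))
  rw [hrows, hcols, sum_comm]

lemma exists_perm_of_card_fiber_eq {α : Type*} [DecidableEq α] {n : ℕ} (X Y : Fin n → α)
    (h : ∀ v, #{i | X i = v} = #{j | Y j = v}) :
    ∃ π : Equiv.Perm (Fin n), ∀ j, Y j = X (π j) := by
  have e : ∀ v, {j // Y j = v} ≃ {i // X i = v} := fun v =>
    Fintype.equivOfCardEq (by simp only [Fintype.card_subtype, h])
  refine ⟨(Equiv.sigmaFiberEquiv Y).symm.trans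
    ((Equiv.sigmaCongrRight e).trans (Equiv.sigmaFiberEquiv X)), fun j => ?_⟩
  simpa [Equiv.sigmaFiberEquiv, Equiv.sigmaCongrRight] using ((e (Y j)) ⟨j, rfl⟩).2.symm

theorem stmt_7 {n d : ℕ} (X Y : Fin n → EuclideanSpace ℝ (Fin d)) :
    WL2 X Y = 0 ↔ ∃ π : Equiv.Perm (Fin n), ∀ j, Y j = X (π j) := by
  classical
  constructor
  · intro h
    obtain ⟨T, hT, hcost⟩ := exists_transportCost_eq_WL2 X Y ⟨_, permCoupling_mem 1⟩
    have hsupp := eq_zero_of_transportCost_eq_zero X Y hT (hcost.trans h)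
    refine exists_perm_of_card_fiber_eq X Y fun v => ?_
    rcases eq_or_ne n 0 with rfl | hn
    · simp
    · exact_mod_cast (div_left_inj' (Nat.cast_ne_zero.2 hn)).1
        (card_fiber_div_eq_of_coupling hT hsupp v)
  · rintro ⟨π, hπ⟩
    exact IsLeast.csInf_eq ⟨⟨_, permCoupling_mem π, transportCost_permCoupling hπ⟩,
      Set.forall_mem_image.2 fun T hT => transportCost_nonneg X Y hT⟩
end
end

section
/- (Theorem 2(i): W_dot is not positive definite.) There exist four point clouds X₁, X₂, X₃, X₄, each of size 2 in ℝ², and coefficients c ∈ ℝ⁴, such that Σ_{i,j=1}^4 c_i c_j W_dot(X_i, X_j) < 0. Hence the similarity kernel W_dot is not a positive definite kernel on point clouds. (One may take the points u₀=(0,0), u₁=(0,1), u₂=(1,0), u₃=(1,1) and X₁={u₀,u₁}, X₂={u₀,u₂}, X₃={u₀,u₃}, X₄={u₁,u₂}.) -/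
open scoped RealInnerProductSpace BigOperators

noncomputable section

/-!
A coupling of two 2-point clouds is determined by its (0,0) entry `t ∈ [0, 1/2]`, and the
transport objective is affine in `t`; so `Wdot` of two 2-point clouds is the larger of the values
at the two permutation couplings.
-/

theorem mem_coupling_two_two_iff {T : Matrix (Fin 2) (Fin 2) ℝ} :
    T ∈ Coupling 2 2 ↔ ∃ t ∈ Set.Icc (0 : ℝ) (1 / 2), T = !![t, 1 / 2 - t; 1 / 2 - t, t] := by
  constructor
  · rintro ⟨hpos, hrow, hcol⟩
    have h₀ := hrow 0
    have h₁ := hrow 1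
    have h₂ := hcol 0
    simp only [Fin.sum_univ_two] at h₀ h₁ h₂
    refine ⟨T 0 0, ⟨hpos 0 0, by linarith [hpos 0 1]⟩, ?_⟩
    ext i j
    fin_cases i <;> fin_cases j <;> simp <;> linarith
  · rintro ⟨t, ⟨ht₀, ht₁⟩, rfl⟩
    refine ⟨?_, ?_, ?_⟩
    · intro i j
      fin_cases i <;> fin_cases j <;> simp <;> linarith
    · intro i
      fin_cases i <;> simp [Fin.sum_univ_two]
    · intro j
      fin_cases j <;> simp [Fin.sum_univ_two]

theorem isGreatest_transport_two {d : ℕ} (x₀ x₁ y₀ y₁ : EuclideanSpace ℝ (Fin d)) :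
    IsGreatest ((fun T : Matrix (Fin 2) (Fin 2) ℝ =>
        ∑ i, ∑ j, T i j * ⟪![x₀, x₁] i, ![y₀, y₁] j⟫) '' Coupling 2 2)
      (max ((⟪x₀, y₀⟫ + ⟪x₁, y₁⟫) / 2) ((⟪x₀, y₁⟫ + ⟪x₁, y₀⟫) / 2)) := by
  set a := ⟪x₀, y₀⟫ + ⟪x₁, y₁⟫
  set b := ⟪x₀, y₁⟫ + ⟪x₁, y₀⟫
  have cost : ∀ t : ℝ, ∑ i, ∑ j, (!![t, 1 / 2 - t; 1 / 2 - t, t] : Matrix (Fin 2) (Fin 2) ℝ) i j *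
      ⟪![x₀, x₁] i, ![y₀, y₁] j⟫ = t * a + (1 / 2 - t) * b := by
    intro t
    simp only [Fin.sum_univ_two, Matrix.of_apply, Matrix.cons_val', Matrix.cons_val_zero,
      Matrix.cons_val_one, Matrix.empty_val', Matrix.cons_val_fin_one, a, b]
    ring
  constructor
  · rcases max_choice (a / 2) (b / 2) with h | h <;> rw [h]
    · exact ⟨_, mem_coupling_two_two_iff.2 ⟨1 / 2, by norm_num, rfl⟩, (cost _).trans (by ring)⟩
    · exact ⟨_, mem_coupling_two_two_iff.2 ⟨0, by norm_num, rfl⟩, (cost _).trans (by ring)⟩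
  · rintro _ ⟨T, hT, rfl⟩
    obtain ⟨t, ⟨ht₀, ht₁⟩, rfl⟩ := mem_coupling_two_two_iff.1 hT
    refine (cost t).trans_le ?_
    -- a convex combination of `a / 2` and `b / 2` with weights `2t` and `1 - 2t`
    nlinarith [le_max_left (a / 2) (b / 2), le_max_right (a / 2) (b / 2)]

theorem Wdot_two {d : ℕ} (x₀ x₁ y₀ y₁ : EuclideanSpace ℝ (Fin d)) :
    Wdot ![x₀, x₁] ![y₀, y₁] =
      max ((⟪x₀, y₀⟫ + ⟪x₁, y₁⟫) / 2) ((⟪x₀, y₁⟫ + ⟪x₁, y₀⟫) / 2) :=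
  (isGreatest_transport_two x₀ x₁ y₀ y₁).csSup_eq

theorem stmt_9 :
    ∃ (X : Fin 4 → (Fin 2 → EuclideanSpace ℝ (Fin 2))) (c : Fin 4 → ℝ),
      ∑ i, ∑ j, c i * c j * Wdot (X i) (X j) < 0 := by
  let u₀ : EuclideanSpace ℝ (Fin 2) := !₂[0, 0]
  let u₁ : EuclideanSpace ℝ (Fin 2) := !₂[0, 1]
  let u₂ : EuclideanSpace ℝ (Fin 2) := !₂[1, 0]
  let u₃ : EuclideanSpace ℝ (Fin 2) := !₂[1, 1]
  -- kernel matrix [[1/2, 0, 1/2, 1/2], [0, 1/2, 1/2, 1/2], [1/2, 1/2, 1, 1/2], [1/2, 1/2, 1/2, 1]],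
  -- whose quadratic form at (3, 3, -2, -2) is -3
  refine ⟨![![u₀, u₁], ![u₀, u₂], ![u₀, u₃], ![u₁, u₂]], ![3, 3, -2, -2], ?_⟩
  simp only [Fin.sum_univ_four, Matrix.cons_val, Wdot_two, PiLp.inner_apply, Fin.sum_univ_two,
    u₀, u₁, u₂, u₃]
  norm_num
end
end

section
/- (Theorem 2(ii): W_L2 is not conditionally negative definite.) There exist N ∈ ℕ, point clouds X₁, …, X_N, each of size 2 in ℝ², and coefficients c ∈ ℝ^N with Σ_i c_i = 0, such that Σ_{i,j=1}^N c_i c_j W_L2(X_i, X_j) > 0. Hence the discrepancy kernel W_L2 is not conditionally negative definite on point clouds. -/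
/-!
The four clouds `X₁ = {(0,-1),(1,1)}`, `X₂ = {(1,-1),(0,1)}`, `X₃ = {(1,1),(-1,0)}`,
`X₄ = {(1,0),(-1,1)}` form a "quadrilateral" for `W_L2`: the sides `X₁X₂, X₂X₄, X₄X₃, X₃X₁` have
discrepancy `1` while the diagonals `X₁X₄, X₂X₃` have discrepancy `3`. A conditionally negative
definite kernel vanishing on the diagonal satisfies the quadrilateral inequality
`k₁₄ + k₂₃ ≤ k₁₂ + k₂₄ + k₄₃ + k₃₁`, which is the quadratic form at `c = (-1, 1, 1, -1)`;
here it fails by `2 · (6 - 4) = 4`. The values are computed from the assignment formula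
`W_L2(X, Y) = min_σ ∑ ‖X i - Y (σ i)‖² / n` for clouds of equal size `n`: up to the factor `n`,
couplings are doubly stochastic matrices, and by Birkhoff's theorem a linear cost attains its
minimum over them at a permutation matrix.
-/

open scoped RealInnerProductSpace BigOperators

noncomputable section

open Matrix Equiv

lemma exists_perm_sum_le_of_mem_doublyStochastic {ι : Type*} [Fintype ι] [DecidableEq ι]
    (C : Matrix ι ι ℝ) {M : Matrix ι ι ℝ} (hM : M ∈ doublyStochastic ℝ ι) :
    ∃ σ : Perm ι, ∑ i, C i (σ i) ≤ ∑ i, ∑ j, M i j * C i j := by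
  let cost : Matrix ι ι ℝ →ₗ[ℝ] ℝ :=
    { toFun := fun M => ∑ i, ∑ j, M i j * C i j
      map_add' := fun _ _ => by simp only [Matrix.add_apply, add_mul, Finset.sum_add_distrib]
      map_smul' := fun _ _ => by
        simp only [Matrix.smul_apply, smul_eq_mul, Finset.mul_sum, mul_assoc, RingHom.id_apply] }
  rw [← SetLike.mem_coe, doublyStochastic_eq_convexHull_permMatrix] at hM
  obtain ⟨_, ⟨σ, rfl⟩, hσ⟩ :=
    (cost.concaveOn convex_univ).exists_le_of_mem_convexHull (Set.subset_univ _) hM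
  refine ⟨σ, le_of_eq_of_le ?_ hσ⟩
  simp [cost, PEquiv.toMatrix_apply]

variable {n : ℕ}

lemma mem_coupling_iff_smul_mem_doublyStochastic [NeZero n] {T : Matrix (Fin n) (Fin n) ℝ} :
    T ∈ Coupling n n ↔ (n : ℝ) • T ∈ doublyStochastic ℝ (Fin n) := by
  have hn : (0 : ℝ) < n := Nat.cast_pos.2 (Nat.pos_of_neZero n)
  simp only [Coupling, Set.mem_ofPred_eq, mem_doublyStochastic_iff_sum, Matrix.smul_apply,
    smul_eq_mul, ← Finset.mul_sum, mul_nonneg_iff_of_pos_left hn, eq_div_iff hn.ne',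
    mul_comm _ (n : ℝ)]

theorem sInf_coupling_cost_eq_iInf_perm [NeZero n] (C : Matrix (Fin n) (Fin n) ℝ) :
    sInf ((fun T : Matrix (Fin n) (Fin n) ℝ => ∑ i, ∑ j, T i j * C i j) '' Coupling n n)
      = (⨅ σ : Perm (Fin n), ∑ i, C i (σ i)) / n := by
  have hn : (0 : ℝ) < n := Nat.cast_pos.2 (Nat.pos_of_neZero n)
  refine IsLeast.csInf_eq ⟨?_, ?_⟩
  · obtain ⟨σ, hσ⟩ := exists_eq_ciInf_of_finite (f := fun σ : Perm (Fin n) => ∑ i, C i (σ i))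
    have hmem : (n : ℝ)⁻¹ • σ.permMatrix ℝ ∈ Coupling n n := by
      rw [mem_coupling_iff_smul_mem_doublyStochastic, smul_smul, mul_inv_cancel₀ hn.ne', one_smul]
      exact permMatrix_mem_doublyStochastic
    refine ⟨_, hmem, ?_⟩
    simp [← hσ, PEquiv.toMatrix_apply, Finset.mul_sum, div_eq_inv_mul]
  · rintro _ ⟨T, hT, rfl⟩
    obtain ⟨σ, hσ⟩ := exists_perm_sum_le_of_mem_doublyStochastic C
      (mem_coupling_iff_smul_mem_doublyStochastic.1 hT)
    simp only [Matrix.smul_apply, smul_eq_mul, mul_assoc, ← Finset.mul_sum] at hσ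
    rw [div_le_iff₀' hn]
    exact (ciInf_le (Finite.bddBelow_range _) σ).trans hσ

theorem WL2_eq_iInf_perm [NeZero n] {d : ℕ} (X Y : Fin n → EuclideanSpace ℝ (Fin d)) :
    WL2 X Y = (⨅ σ : Perm (Fin n), ∑ i, ‖X i - Y (σ i)‖ ^ 2) / n :=
  sInf_coupling_cost_eq_iInf_perm fun i j => ‖X i - Y j‖ ^ 2

lemma Equiv.Perm.iInf_fin_two {α : Type*} [ConditionallyCompleteLinearOrder α]
    (f : Perm (Fin 2) → α) : ⨅ σ, f σ = min (f 1) (f (swap 0 1)) := by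
  have hσ : ∀ σ : Perm (Fin 2), σ = 1 ∨ σ = swap 0 1 := by decide
  refine le_antisymm (le_min (ciInf_le (Finite.bddBelow_range f) _)
    (ciInf_le (Finite.bddBelow_range f) _)) (le_ciInf fun σ => ?_)
  rcases hσ σ with rfl | rfl
  · exact min_le_left _ _
  · exact min_le_right _ _

theorem WL2_fin_two {d : ℕ} (X Y : Fin 2 → EuclideanSpace ℝ (Fin d)) :
    WL2 X Y = min (‖X 0 - Y 0‖ ^ 2 + ‖X 1 - Y 1‖ ^ 2) (‖X 0 - Y 1‖ ^ 2 + ‖X 1 - Y 0‖ ^ 2) / 2 := by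
  rw [WL2_eq_iInf_perm, Perm.iInf_fin_two]
  simp [Fin.sum_univ_two]

lemma EuclideanSpace.norm_sub_sq_fin_two (x y : EuclideanSpace ℝ (Fin 2)) :
    ‖x - y‖ ^ 2 = (x 0 - y 0) ^ 2 + (x 1 - y 1) ^ 2 := by
  simp [EuclideanSpace.real_norm_sq_eq, Fin.sum_univ_two]

theorem stmt_10 :
    ∃ (N : ℕ) (X : Fin N → (Fin 2 → EuclideanSpace ℝ (Fin 2))) (c : Fin N → ℝ),
      ∑ i, c i = 0 ∧ 0 < ∑ i, ∑ j, c i * c j * WL2 (X i) (X j) := by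
  refine ⟨4, ![![!₂[0, -1], !₂[1, 1]], ![!₂[1, -1], !₂[0, 1]],
      ![!₂[1, 1], !₂[-1, 0]], ![!₂[1, 0], !₂[-1, 1]]], ![-1, 1, 1, -1], ?_, ?_⟩
  · simp [Fin.sum_univ_four]
  · simp only [Fin.sum_univ_four, WL2_fin_two, cons_val_zero, cons_val_one, cons_val_two,
      cons_val_three, EuclideanSpace.norm_sub_sq_fin_two]
    norm_num
end
end
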